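/- arXiv:2605.12615 — 7 statements merged into one kernel-verified Lean document; each statement's English description precedes it below -/
import Mathlib

section
/- Let n ≥ 1 and let T be an n×n complex unitary matrix such that for every vector z ∈ ℂⁿ one has ∑_{i=1}^n ((Tz)_i)³ = ∑_{i=1}^n (z_i)³. Then there exist a permutation σ of {1,…,n} and complex numbers d₁,…,dₙ with |d_i| = 1 for every i such that T = P_σ · D, where P_σ is the permutation matrix of σ and D = diag(d₁,…,dₙ). -/
/-!
The columns of a unitary matrix are unit vectors `c`, and preserving the sum of cubes forces
`∑ i, c i ^ 3 = 1` for each of them. Since `|c i| ≤ 1`, we get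
`1 ≤ ∑ i, |c i| ^ 3 ≤ ∑ i, |c i| ^ 2 = 1`, so every `|c i|` is `0` or `1` and, the column being
a unit vector, exactly one entry is nonzero. Orthogonality of distinct columns makes the rows of
these entries pairwise distinct, which gives the permutation.
-/

open Matrix Finset

theorem exists_eq_one_and_eq_zero_of_sum_sq_eq_one_of_one_le_sum_cube {ι : Type*} [Fintype ι]
    {a : ι → ℝ} (ha : ∀ i, 0 ≤ a i) (h2 : ∑ i, a i ^ 2 = 1) (h3 : 1 ≤ ∑ i, a i ^ 3) :
    ∃ i, a i = 1 ∧ ∀ k ≠ i, a k = 0 := by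
  classical
  have hle : ∀ i, a i ≤ 1 := fun i =>
    (pow_le_one_iff_of_nonneg (ha i) two_ne_zero).1
      (h2 ▸ single_le_sum (fun k _ => sq_nonneg (a k)) (mem_univ i))
  have hgap : ∀ i, 0 ≤ a i ^ 2 * (1 - a i) := fun i =>
    mul_nonneg (sq_nonneg _) (sub_nonneg.2 (hle i))
  have hsum : ∑ i, a i ^ 2 * (1 - a i) = 0 := by
    refine le_antisymm ?_ (sum_nonneg fun i _ => hgap i)
    have : ∑ i, a i ^ 2 * (1 - a i) = ∑ i, a i ^ 2 - ∑ i, a i ^ 3 := by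
      rw [← sum_sub_distrib]; exact sum_congr rfl fun i _ => by ring
    linarith
  have h01 : ∀ i, a i = 0 ∨ a i = 1 := fun i => by
    rcases mul_eq_zero.1 ((sum_eq_zero_iff_of_nonneg fun i _ => hgap i).1 hsum i (mem_univ i))
      with h | h
    · exact .inl (pow_eq_zero_iff two_ne_zero |>.1 h)
    · exact .inr (by linarith)
  obtain ⟨i, hi⟩ : ∃ i, a i = 1 := by
    by_contra! hne
    simp [fun i => (h01 i).resolve_right (hne i)] at h2
  refine ⟨i, hi, fun k hk => ?_⟩
  have hrest : ∑ k ∈ univ.erase i, a k ^ 2 = 0 := by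
    rw [← add_sum_erase _ _ (mem_univ i), hi] at h2
    linarith
  exact pow_eq_zero_iff two_ne_zero |>.1 <|
    (sum_eq_zero_iff_of_nonneg fun k _ => sq_nonneg (a k)).1 hrest k (mem_erase.2 ⟨hk, mem_univ k⟩)

theorem exists_norm_eq_one_and_eq_zero_of_sum_norm_sq_eq_one {𝕜 ι : Type*}
    [NormedDivisionRing 𝕜] [Fintype ι] {c : ι → 𝕜}
    (h2 : ∑ i, ‖c i‖ ^ 2 = 1) (h3 : 1 ≤ ‖∑ i, c i ^ 3‖) :
    ∃ i, ‖c i‖ = 1 ∧ ∀ k ≠ i, c k = 0 := by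
  have h3' : 1 ≤ ∑ i, ‖c i‖ ^ 3 :=
    h3.trans ((norm_sum_le _ _).trans_eq (sum_congr rfl fun i _ => norm_pow (c i) 3))
  obtain ⟨i, hi, hk⟩ :=
    exists_eq_one_and_eq_zero_of_sum_sq_eq_one_of_one_le_sum_cube (fun _ => norm_nonneg _) h2 h3'
  exact ⟨i, hi, fun k hki => norm_eq_zero.1 (hk k hki)⟩

namespace Matrix

variable {n : Type*} [Fintype n] [DecidableEq n]

theorem sum_norm_sq_apply_eq_one_of_mem_unitaryGroup {𝕜 : Type*} [RCLike 𝕜]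
    {U : Matrix n n 𝕜} (hU : U ∈ unitaryGroup n 𝕜) (j : n) : ∑ i, ‖U i j‖ ^ 2 = 1 := by
  have h := congr_fun₂ (mem_unitaryGroup_iff'.1 hU) j j
  simp only [mul_apply, star_apply, one_apply_eq, RCLike.star_def, RCLike.conj_mul] at h
  exact_mod_cast h

theorem injective_of_mem_unitaryGroup_of_apply_eq_zero {R : Type*} [CommRing R] [StarRing R]
    [NoZeroDivisors R] {U : Matrix n n R} (hU : U ∈ unitaryGroup n R) {f : n → n}
    (hne : ∀ j, U (f j) j ≠ 0) (hzero : ∀ j, ∀ i ≠ f j, U i j = 0) : Function.Injective f := by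
  intro j k hjk
  by_contra hjk'
  have h := congr_fun₂ (mem_unitaryGroup_iff'.1 hU) j k
  rw [mul_apply, one_apply_ne hjk', sum_eq_single (f j) (fun i _ hi => by simp [hzero j i hi])
    (by simp), star_apply, hjk] at h
  exact mul_ne_zero (star_ne_zero.2 (hjk ▸ hne j)) (hne k) h

theorem eq_mul_diagonal_of_apply_eq_zero {m R : Type*} [DecidableEq m] [NonAssocSemiring R]
    {M : Matrix m n R} {f : n → m} (hzero : ∀ j, ∀ i ≠ f j, M i j = 0) :
    M = (of fun i j => if i = f j then (1 : R) else 0) * diagonal fun j => M (f j) j := by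
  ext i j
  rw [mul_diagonal, of_apply]
  split_ifs with h
  · rw [h, one_mul]
  · rw [zero_mul, hzero j i h]

end Matrix

theorem cube_preserving_unitary_is_perm_times_phase_general
    {n : ℕ} (T : Matrix (Fin n) (Fin n) ℂ)
    (hT : T ∈ Matrix.unitaryGroup (Fin n) ℂ)
    (hpres : ∀ z : Fin n → ℂ, ∑ i, (T.mulVec z i) ^ 3 = ∑ i, (z i) ^ 3) :
    ∃ (σ : Equiv.Perm (Fin n)) (d : Fin n → ℂ),
      (∀ i, ‖d i‖ = 1) ∧
      T = (Matrix.of fun i j => if i = σ j then (1 : ℂ) else 0) * Matrix.diagonal d := by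
  have hcube : ∀ j, ∑ i, T i j ^ 3 = 1 := fun j => by
    simpa [mulVec_single_one, Pi.single_apply] using hpres (Pi.single j 1)
  choose f hf hzero using fun j =>
    exists_norm_eq_one_and_eq_zero_of_sum_norm_sq_eq_one
      (sum_norm_sq_apply_eq_one_of_mem_unitaryGroup hT j) (by simp [hcube j])
  have hinj : Function.Injective f :=
    injective_of_mem_unitaryGroup_of_apply_eq_zero hT (fun j => norm_ne_zero_iff.1 (by simp [hf j]))
      hzero
  exact ⟨.ofBijective f hinj.bijective_of_finite, fun j => T (f j) j, hf,
    eq_mul_diagonal_of_apply_eq_zero hzero⟩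

/-- If a unitary `T` preserves the sum of cubes of coordinates,
then `T` is a permutation matrix times a diagonal phase matrix. -/
theorem cube_preserving_unitary_is_perm_times_phase
    {n : ℕ} (hn : 1 ≤ n) (T : Matrix (Fin n) (Fin n) ℂ)
    (hT : T ∈ Matrix.unitaryGroup (Fin n) ℂ)
    (hpres : ∀ z : Fin n → ℂ, ∑ i, (T.mulVec z i) ^ 3 = ∑ i, (z i) ^ 3) :
    ∃ (σ : Equiv.Perm (Fin n)) (d : Fin n → ℂ),
      (∀ i, ‖d i‖ = 1) ∧
      T = (Matrix.of fun i j => if i = σ j then (1 : ℂ) else 0) * Matrix.diagonal d :=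
  cube_preserving_unitary_is_perm_times_phase_general T hT hpres
end

section
/- Let n ≥ 1, let U be an n×n complex unitary matrix, and let δ > 0 satisfy n·δ < 1 − √2/2. If (1/n)·|∑_{i,k} (U_{ik})³| ≥ 1 − δ, then there exist a permutation σ of {1,…,n} and complex numbers d₁,…,dₙ with |d_k| = 1 for every k such that ‖U − P_σ·D‖_F ≤ √(3nδ), where P_σ is the permutation matrix of σ and D = diag(d₁,…,dₙ). -/
open Matrix

/-!
Let `m k` be the largest modulus in column `k` of `U`, attained in row `τ k`. Columns are unit
vectors, so `∑ i, |U i k|³ ≤ m k`, and the hypothesis gives `∑ k, m k ≥ n (1 - δ)`; as every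
`m k ≤ 1`, each `m k ≥ 1 - n δ > √2 / 2`. Two entries of modulus `> √2 / 2` cannot share a row of a
unitary matrix, so `τ` is a permutation. With the phases `d k = U (τ k) k / m k`, column `k` of
`U - P_τ D` has squared norm `(1 - m k)² + (1 - (m k)²) = 2 (1 - m k)`, and these sum to
`2 (n - ∑ k, m k) ≤ 2 n δ ≤ 3 n δ`.
-/

section UnitVectors

variable {ι 𝕜 : Type*} [Fintype ι] [RCLike 𝕜]

lemma sum_norm_pow_three_le_mul_sum_norm_sq {v : ι → 𝕜} {i₀ : ι} (hmax : ∀ i, ‖v i‖ ≤ ‖v i₀‖) :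
    ∑ i, ‖v i‖ ^ 3 ≤ ‖v i₀‖ * ∑ i, ‖v i‖ ^ 2 := by
  rw [Finset.mul_sum]
  refine Finset.sum_le_sum fun i _ => ?_
  calc ‖v i‖ ^ 3 = ‖v i‖ * ‖v i‖ ^ 2 := by ring
    _ ≤ ‖v i₀‖ * ‖v i‖ ^ 2 := by gcongr; exact hmax i

lemma norm_sub_div_norm_self {z : 𝕜} (hz : z ≠ 0) : ‖z - z / (‖z‖ : 𝕜)‖ = |‖z‖ - 1| := by
  have hz' : (‖z‖ : 𝕜) ≠ 0 := by simpa using hz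
  rw [show z - z / ‖z‖ = z / ‖z‖ * ((‖z‖ - 1 : ℝ) : 𝕜) by field_simp; push_cast; ring,
    norm_mul, norm_div, RCLike.norm_ofReal, RCLike.norm_ofReal, abs_norm,
    div_self (norm_ne_zero_iff.mpr hz), one_mul]

lemma norm_div_norm_self {z : 𝕜} (hz : z ≠ 0) : ‖z / (‖z‖ : 𝕜)‖ = 1 := by
  rw [norm_div, RCLike.norm_ofReal, abs_norm, div_self (norm_ne_zero_iff.mpr hz)]

lemma sum_norm_sq_sub_single [DecidableEq ι] (v : ι → 𝕜) (i₀ : ι) (c : 𝕜) :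
    ∑ i, ‖v i - (Pi.single i₀ c : ι → 𝕜) i‖ ^ 2 = ∑ i, ‖v i‖ ^ 2 - ‖v i₀‖ ^ 2 + ‖v i₀ - c‖ ^ 2 := by
  have hoff : ∑ i ∈ Finset.univ.erase i₀, ‖v i - (Pi.single i₀ c : ι → 𝕜) i‖ ^ 2 =
      ∑ i ∈ Finset.univ.erase i₀, ‖v i‖ ^ 2 :=
    Finset.sum_congr rfl fun i hi => by
      rw [Pi.single_eq_of_ne (Finset.ne_of_mem_erase hi), sub_zero]
  rw [← Finset.add_sum_erase _ _ (Finset.mem_univ i₀),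
    ← Finset.add_sum_erase _ (fun i => ‖v i‖ ^ 2) (Finset.mem_univ i₀), hoff, Pi.single_eq_same]
  ring

lemma sum_norm_sq_sub_single_div_norm [DecidableEq ι] {v : ι → 𝕜} (hv : ∑ i, ‖v i‖ ^ 2 = 1)
    {i₀ : ι} (h₀ : v i₀ ≠ 0) :
    ∑ i, ‖v i - (Pi.single i₀ (v i₀ / (‖v i₀‖ : 𝕜)) : ι → 𝕜) i‖ ^ 2 = 2 * (1 - ‖v i₀‖) := by
  rw [sum_norm_sq_sub_single, hv, norm_sub_div_norm_self h₀, sq_abs]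
  ring

lemma one_sub_le_card_sub_sum {m : ι → ℝ} (hm : ∀ k, m k ≤ 1) (k : ι) :
    1 - m k ≤ Fintype.card ι - ∑ j, m j := by
  have := Finset.single_le_sum (f := fun j => 1 - m j) (fun j _ => sub_nonneg.2 (hm j))
    (Finset.mem_univ k)
  simpa [Finset.sum_sub_distrib] using this

end UnitVectors

section Matrices

variable {ι κ 𝕜 : Type*} [Fintype κ] [RCLike 𝕜]

lemma norm_sum_sum_pow_three_le [Fintype ι] {U : Matrix ι κ 𝕜} (hcol : ∀ k, ∑ i, ‖U i k‖ ^ 2 = 1)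
    {τ : κ → ι} (hτ : ∀ k i, ‖U i k‖ ≤ ‖U (τ k) k‖) :
    ‖∑ i, ∑ k, U i k ^ 3‖ ≤ ∑ k, ‖U (τ k) k‖ :=
  calc ‖∑ i, ∑ k, U i k ^ 3‖ ≤ ∑ i, ∑ k, ‖U i k‖ ^ 3 := by
        refine (norm_sum_le _ _).trans (Finset.sum_le_sum fun i _ => ?_)
        exact (norm_sum_le _ _).trans_eq (Finset.sum_congr rfl fun k _ => norm_pow _ _)
    _ = ∑ k, ∑ i, ‖U i k‖ ^ 3 := Finset.sum_comm
    _ ≤ ∑ k, ‖U (τ k) k‖ := Finset.sum_le_sum fun k _ => by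
        simpa only [hcol k, mul_one] using sum_norm_pow_three_le_mul_sum_norm_sq (hτ k)

lemma injective_of_half_lt_norm_sq {U : Matrix ι κ 𝕜} (hrow : ∀ i, ∑ k, ‖U i k‖ ^ 2 = 1)
    {τ : κ → ι} (hτ : ∀ k, 1 / 2 < ‖U (τ k) k‖ ^ 2) : Function.Injective τ := by
  classical
  intro k k' hkk'
  by_contra hne
  have hpair : ‖U (τ k) k‖ ^ 2 + ‖U (τ k) k'‖ ^ 2 ≤ 1 := by
    rw [← hrow (τ k), ← Finset.sum_pair (f := fun j => ‖U (τ k) j‖ ^ 2) hne]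
    exact Finset.sum_le_univ_sum_of_nonneg fun _ => sq_nonneg _
  have hk' : 1 / 2 < ‖U (τ k) k'‖ ^ 2 := hkk' ▸ hτ k'
  linarith [hτ k]

lemma of_ite_mul_diagonal_apply {R : Type*} [NonAssocSemiring R] [DecidableEq ι] [DecidableEq κ]
    (σ : κ → ι) (d : κ → R) (i : ι) (k : κ) :
    ((of fun i j => if i = σ j then (1 : R) else 0) * diagonal d) i k =
      (Pi.single (σ k) (d k) : ι → R) i := by
  rw [mul_diagonal, of_apply, Pi.single_apply]
  split_ifs <;> simp

end Matrices

section Unitary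

variable {ι 𝕜 : Type*} [Fintype ι] [DecidableEq ι] [RCLike 𝕜] {U : Matrix ι ι 𝕜}

lemma sum_norm_sq_row_of_mem_unitaryGroup (hU : U ∈ unitaryGroup ι 𝕜) (i : ι) :
    ∑ k, ‖U i k‖ ^ 2 = 1 := by
  have h := congrFun (congrFun (mem_unitaryGroup_iff.mp hU) i) i
  simp only [mul_apply, star_apply, one_apply_eq, RCLike.star_def, RCLike.mul_conj] at h
  exact_mod_cast h

lemma sum_norm_sq_col_of_mem_unitaryGroup (hU : U ∈ unitaryGroup ι 𝕜) (k : ι) :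
    ∑ i, ‖U i k‖ ^ 2 = 1 :=
  sum_norm_sq_row_of_mem_unitaryGroup (transpose_mem_unitaryGroup_iff.mpr hU) k

end Unitary

lemma half_lt_sq_of_sqrt_two_div_two_lt {x : ℝ} (hx : √2 / 2 < x) : 1 / 2 < x ^ 2 := by
  have h : (√2 / 2) ^ 2 = 1 / 2 := by rw [div_pow, Real.sq_sqrt zero_le_two]; norm_num
  exact h ▸ pow_lt_pow_left₀ hx (by positivity) two_ne_zero

theorem unitary_close_to_perm_times_phase_of_cube_sum_large_general
    {n : ℕ} (U : Matrix (Fin n) (Fin n) ℂ)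
    (hU : U ∈ Matrix.unitaryGroup (Fin n) ℂ)
    (δ : ℝ) (hnδ : (n : ℝ) * δ < 1 - Real.sqrt 2 / 2)
    (hsum : (1 / (n : ℝ)) * ‖∑ i, ∑ k, (U i k) ^ 3‖ ≥ 1 - δ) :
    ∃ (σ : Equiv.Perm (Fin n)) (d : Fin n → ℂ),
      (∀ k, ‖d k‖ = 1) ∧
      Real.sqrt (∑ i, ∑ k, ‖
          (U - (Matrix.of fun i j => if i = σ j then (1 : ℂ) else 0) * Matrix.diagonal d) i k‖ ^ 2)
        ≤ Real.sqrt (3 * n * δ) := by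
  have hcol := sum_norm_sq_col_of_mem_unitaryGroup hU
  choose τ hτ using fun k : Fin n => have : Nonempty (Fin n) := ⟨k⟩; Finite.exists_max (‖U · k‖)
  have hmass : n * (1 - δ) ≤ ∑ k, ‖U (τ k) k‖ :=
    calc n * (1 - δ) ≤ n * (1 / n * ‖∑ i, ∑ k, U i k ^ 3‖) := by gcongr
      -- an equality, except for `n = 0`, where `1 / n = 0`
      _ ≤ ‖∑ i, ∑ k, U i k ^ 3‖ := by rcases eq_or_ne (n : ℝ) 0 with h | h <;> simp [h]
      _ ≤ ∑ k, ‖U (τ k) k‖ := norm_sum_sum_pow_three_le hcol fun k i => hτ k i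
  have hdefect := one_sub_le_card_sub_sum fun k => entry_norm_bound_of_unitary hU (τ k) k
  simp only [Fintype.card_fin] at hdefect
  have hlarge (k : Fin n) : √2 / 2 < ‖U (τ k) k‖ := by linarith [hdefect k]
  have hτinj : Function.Injective τ := injective_of_half_lt_norm_sq
    (sum_norm_sq_row_of_mem_unitaryGroup hU) fun k => half_lt_sq_of_sqrt_two_div_two_lt (hlarge k)
  have hne (k : Fin n) : U (τ k) k ≠ 0 :=
    norm_pos_iff.mp ((by positivity : 0 < √2 / 2).trans (hlarge k))
  refine ⟨Equiv.ofBijective τ hτinj.bijective_of_finite, fun k => U (τ k) k / ‖U (τ k) k‖,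
    fun k => norm_div_norm_self (hne k), Real.sqrt_le_sqrt ?_⟩
  simp only [Matrix.sub_apply, of_ite_mul_diagonal_apply, Equiv.ofBijective_apply]
  have hdefect_nonneg : 0 ≤ (n : ℝ) - ∑ k, ‖U (τ k) k‖ := by
    simpa using Finset.sum_le_card_nsmul Finset.univ _ _ fun k _ =>
      entry_norm_bound_of_unitary hU (τ k) k
  calc ∑ i, ∑ k, ‖U i k - (Pi.single (τ k) (U (τ k) k / ‖U (τ k) k‖) : Fin n → ℂ) i‖ ^ 2
      = ∑ k, 2 * (1 - ‖U (τ k) k‖) := by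
        rw [Finset.sum_comm]
        exact Finset.sum_congr rfl fun k _ => sum_norm_sq_sub_single_div_norm (hcol k) (hne k)
    _ = 2 * (n - ∑ k, ‖U (τ k) k‖) := by simp [← Finset.mul_sum, Finset.sum_sub_distrib]
    _ ≤ 3 * n * δ := by linarith

/-- If the normalized sum of cubes of entries of a unitary `U` is close to 1,
then `U` is (in Frobenius norm) close to a permutation matrix times a diagonal phase matrix. -/
theorem unitary_close_to_perm_times_phase_of_cube_sum_large
    {n : ℕ} (hn : 1 ≤ n) (U : Matrix (Fin n) (Fin n) ℂ)
    (hU : U ∈ Matrix.unitaryGroup (Fin n) ℂ)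
    (δ : ℝ) (hδ : 0 < δ) (hnδ : (n : ℝ) * δ < 1 - Real.sqrt 2 / 2)
    (hsum : (1 / (n : ℝ)) * ‖∑ i, ∑ k, (U i k) ^ 3‖ ≥ 1 - δ) :
    ∃ (σ : Equiv.Perm (Fin n)) (d : Fin n → ℂ),
      (∀ k, ‖d k‖ = 1) ∧
      Real.sqrt (∑ i, ∑ k, ‖
          (U - (Matrix.of fun i j => if i = σ j then (1 : ℂ) else 0) * Matrix.diagonal d) i k‖ ^ 2)
        ≤ Real.sqrt (3 * n * δ) :=
  unitary_close_to_perm_times_phase_of_cube_sum_large_general U hU δ hnδ hsum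
end

section
/- Let n ≥ 1 and m > 0 be real. Let A₁, A₂ be n×n real matrices with nonnegative entries and Frobenius norms ‖A₁‖_F = ‖A₂‖_F = √(2m), regarded as complex matrices. Let U be an n×n complex unitary matrix, let P be the permutation matrix of a permutation of {1,…,n}, let D be a diagonal matrix whose diagonal entries all have modulus 1, and let t ≥ 0 satisfy ‖U − P·D‖_F ≤ t. Then |Tr(A₁·Uᵀ·A₂·U)| ≤ Tr(A₁·Pᵀ·A₂·P) + 4mt + 2mt². -/
/-! Write `U = Q + E` with `Q = P D` unitary and `‖E‖_F ≤ t`, and expand `Tr(A₁ Uᵀ A₂ U)`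
bilinearly in `(Q, E)`. Since `A₁`, `A₂`, `P` are entrywise nonnegative and the phases have modulus
one, the `(Q, Q)` term has modulus at most `Tr(A₁ Pᵀ A₂ P)`. The other three terms are bounded via
`|Tr(XY)| ≤ ‖X‖_F ‖Y‖_F`, submultiplicativity and unitary invariance of the Frobenius norm, by
`‖A₁‖_F ‖A₂‖_F (2t + t²) = 2m (2t + t²)`. -/

open Matrix

attribute [local instance] Matrix.frobeniusNormedAddCommGroup

namespace Matrix

section Frobenius

variable {ι κ 𝕜 : Type*} [Fintype ι] [Fintype κ] [RCLike 𝕜]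

theorem frobenius_norm_eq_sqrt {α : Type*} [NormedAddCommGroup α] (A : Matrix ι κ α) :
    ‖A‖ = √(∑ i, ∑ j, ‖A i j‖ ^ 2) := by
  simp [frobenius_norm_def, Real.sqrt_eq_rpow]

-- The Frobenius norm of a matrix is definitionally the norm of the nested `PiLp` vector of its rows.
theorem trace_mul_eq_inner (A : Matrix ι κ 𝕜) (B : Matrix κ ι 𝕜) :
    (A * B).trace = inner 𝕜 (WithLp.toLp 2 fun i => WithLp.toLp 2 fun j => star (A i j))
      (WithLp.toLp 2 fun i => WithLp.toLp 2 fun j => B j i) := by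
  simp [trace, mul_apply, PiLp.inner_apply, mul_comm]

theorem norm_trace_mul_le (A : Matrix ι κ 𝕜) (B : Matrix κ ι 𝕜) :
    ‖(A * B).trace‖ ≤ ‖A‖ * ‖B‖ := by
  rw [trace_mul_eq_inner]
  exact (norm_inner_le_norm _ _).trans_eq <| by
    rw [← frobenius_norm_map_eq A star norm_star, ← frobenius_norm_transpose B]; rfl

theorem trace_mul_conjTranspose_self (A : Matrix ι κ 𝕜) :
    (A * Aᴴ).trace = (‖A‖ : 𝕜) ^ 2 := by
  simp only [trace_mul_eq_inner, conjTranspose_apply]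
  rw [inner_self_eq_norm_sq_to_K, ← frobenius_norm_map_eq A star norm_star]
  rfl

theorem norm_trace_mul_transpose_mul_mul_le (A B X Y : Matrix ι ι 𝕜) :
    ‖(A * Xᵀ * B * Y).trace‖ ≤ ‖A * Xᵀ‖ * ‖B * Y‖ := by
  rw [Matrix.mul_assoc _ B]
  exact norm_trace_mul_le _ _

variable [DecidableEq ι]

theorem frobenius_norm_mul_of_mem_unitaryGroup (A : Matrix κ ι 𝕜) {Q : Matrix ι ι 𝕜}
    (hQ : Q ∈ unitaryGroup ι 𝕜) : ‖A * Q‖ = ‖A‖ := by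
  have h : (‖A * Q‖ : 𝕜) ^ 2 = (‖A‖ : 𝕜) ^ 2 := by
    rw [← trace_mul_conjTranspose_self, ← trace_mul_conjTranspose_self, conjTranspose_mul,
      Matrix.mul_assoc, ← Matrix.mul_assoc Q, ← star_eq_conjTranspose,
      (mem_unitaryGroup_iff.mp hQ), Matrix.one_mul]
  exact_mod_cast (pow_left_inj₀ (norm_nonneg _) (norm_nonneg _) two_ne_zero).mp
    (by exact_mod_cast h)

theorem norm_trace_mul_transpose_mul_mul_le_add {Q : Matrix ι ι 𝕜} (hQ : Q ∈ unitaryGroup ι 𝕜)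
    (A B U : Matrix ι ι 𝕜) :
    ‖(A * Uᵀ * B * U).trace‖ ≤
      ‖(A * Qᵀ * B * Q).trace‖ + ‖A‖ * ‖B‖ * (2 * ‖U - Q‖ + ‖U - Q‖ ^ 2) := by
  set E := U - Q
  have hAQ : ‖A * Qᵀ‖ = ‖A‖ :=
    frobenius_norm_mul_of_mem_unitaryGroup A (transpose_mem_unitaryGroup_iff.mpr hQ)
  have hBQ : ‖B * Q‖ = ‖B‖ := frobenius_norm_mul_of_mem_unitaryGroup B hQ
  have hAE : ‖A * Eᵀ‖ ≤ ‖A‖ * ‖E‖ :=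
    (frobenius_norm_mul A _).trans_eq (by rw [frobenius_norm_transpose])
  have hBE : ‖B * E‖ ≤ ‖B‖ * ‖E‖ := frobenius_norm_mul B E
  have hexp : (A * Uᵀ * B * U).trace = (A * Qᵀ * B * Q).trace + (A * Qᵀ * B * E).trace
      + (A * Eᵀ * B * Q).trace + (A * Eᵀ * B * E).trace := by
    rw [← add_sub_cancel Q U, transpose_add]
    simp only [Matrix.mul_add, Matrix.add_mul, trace_add]
    ring
  calc ‖(A * Uᵀ * B * U).trace‖
      ≤ ‖(A * Qᵀ * B * Q).trace‖ + ‖(A * Qᵀ * B * E).trace‖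
        + ‖(A * Eᵀ * B * Q).trace‖ + ‖(A * Eᵀ * B * E).trace‖ := by
        rw [hexp]; exact norm_add₄_le
    _ ≤ ‖(A * Qᵀ * B * Q).trace‖ + ‖A * Qᵀ‖ * ‖B * E‖ + ‖A * Eᵀ‖ * ‖B * Q‖
        + ‖A * Eᵀ‖ * ‖B * E‖ := by
        gcongr <;> exact norm_trace_mul_transpose_mul_mul_le _ _ _ _
    _ ≤ ‖(A * Qᵀ * B * Q).trace‖ + ‖A‖ * (‖B‖ * ‖E‖) + ‖A‖ * ‖E‖ * ‖B‖
        + ‖A‖ * ‖E‖ * (‖B‖ * ‖E‖) := by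
        rw [hAQ, hBQ]; gcongr
    _ = _ := by ring

end Frobenius

section UnitaryGroup

variable {ι 𝕜 : Type*} [Fintype ι] [DecidableEq ι] [RCLike 𝕜]

theorem permMatrix_mem_unitaryGroup {R : Type*} [CommRing R] [StarRing R] (σ : Equiv.Perm ι) :
    σ.permMatrix R ∈ unitaryGroup ι R := by
  rw [mem_unitaryGroup_iff, star_eq_conjTranspose, conjTranspose_permMatrix, ← permMatrix_mul,
    inv_mul_cancel, permMatrix_one]

theorem diagonal_mem_unitaryGroup {d : ι → 𝕜} (hd : ∀ i, ‖d i‖ = 1) :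
    diagonal d ∈ unitaryGroup ι 𝕜 := by
  rw [mem_unitaryGroup_iff, star_eq_conjTranspose, diagonal_conjTranspose, diagonal_mul_diagonal,
    ← diagonal_one]
  congr 1
  ext i
  simp [RCLike.mul_conj, hd]

end UnitaryGroup

section EntrywiseBound

variable {ι κ μ α : Type*} [Fintype κ] [SeminormedRing α]

theorem norm_mul_apply_le_of_norm_le {M : Matrix ι κ α} {N : Matrix κ μ α}
    {M' : Matrix ι κ ℝ} {N' : Matrix κ μ ℝ} (hM : ∀ i j, ‖M i j‖ ≤ M' i j)
    (hN : ∀ i j, ‖N i j‖ ≤ N' i j) (i : ι) (k : μ) : ‖(M * N) i k‖ ≤ (M' * N') i k := by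
  simp only [mul_apply]
  refine (norm_sum_le _ _).trans (Finset.sum_le_sum fun j _ => ?_)
  exact (norm_mul_le _ _).trans <|
    mul_le_mul (hM i j) (hN j k) (norm_nonneg _) ((norm_nonneg _).trans (hM i j))

theorem norm_trace_le_of_norm_le {M : Matrix κ κ α} {M' : Matrix κ κ ℝ}
    (hM : ∀ i j, ‖M i j‖ ≤ M' i j) : ‖M.trace‖ ≤ M'.trace :=
  (norm_sum_le _ _).trans (Finset.sum_le_sum fun i _ => hM i i)

end EntrywiseBound

end Matrix

theorem trace_perturbation_bound_general
    {n : ℕ} (m : ℝ) (hm : 0 < m)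
    (A₁ A₂ : Matrix (Fin n) (Fin n) ℝ)
    (hA₁ : ∀ i j, 0 ≤ A₁ i j) (hA₂ : ∀ i j, 0 ≤ A₂ i j)
    (hF₁ : Real.sqrt (∑ i, ∑ k, (A₁ i k) ^ 2) = Real.sqrt (2 * m))
    (hF₂ : Real.sqrt (∑ i, ∑ k, (A₂ i k) ^ 2) = Real.sqrt (2 * m))
    (U : Matrix (Fin n) (Fin n) ℂ)
    (σ : Equiv.Perm (Fin n)) (d : Fin n → ℂ) (hd : ∀ i, ‖d i‖ = 1)
    (t : ℝ)
    (hdist : Real.sqrt (∑ i, ∑ k, ‖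
        ((U - ((Matrix.of fun i j => if i = σ j then (1 : ℝ) else 0).map (Complex.ofReal) *
          Matrix.diagonal d)) i k)‖ ^ 2) ≤ t) :
    ‖(A₁.map Complex.ofReal * Uᵀ * A₂.map Complex.ofReal * U).trace‖
      ≤ (A₁ * (Matrix.of fun i j => if i = σ j then (1 : ℝ) else 0)ᵀ * A₂ *
          (Matrix.of fun i j => if i = σ j then (1 : ℝ) else 0)).trace
        + 4 * m * t + 2 * m * t ^ 2 := by
  set P : Matrix (Fin n) (Fin n) ℝ := of fun i j => if i = σ j then 1 else 0
  set Q : Matrix (Fin n) (Fin n) ℂ := P.map Complex.ofReal * diagonal d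
  have hPc : P.map Complex.ofReal = σ⁻¹.permMatrix ℂ := by
    ext i j
    simp [P, apply_ite Complex.ofReal, PEquiv.toMatrix_apply, Equiv.toPEquiv_apply,
      Equiv.eq_symm_apply, eq_comm]
  have hQ : Q ∈ unitaryGroup (Fin n) ℂ := by
    rw [show Q = P.map Complex.ofReal * diagonal d from rfl, hPc]
    exact mul_mem (permMatrix_mem_unitaryGroup _) (diagonal_mem_unitaryGroup hd)
  have hQP : ∀ i j, ‖Q i j‖ ≤ P i j := by
    intro i j
    simp only [Q, P, mul_diagonal, map_apply, of_apply, norm_mul, hd, mul_one, Complex.norm_real]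
    split_ifs <;> simp
  have hReal : ∀ A : Matrix (Fin n) (Fin n) ℝ, (∀ i j, 0 ≤ A i j) →
      ∀ i j, ‖A.map Complex.ofReal i j‖ ≤ A i j := fun A hA i j => by
    simp [abs_of_nonneg (hA i j)]
  have hPhase : ‖(A₁.map Complex.ofReal * Qᵀ * A₂.map Complex.ofReal * Q).trace‖
      ≤ (A₁ * Pᵀ * A₂ * P).trace :=
    norm_trace_le_of_norm_le <| norm_mul_apply_le_of_norm_le
      (norm_mul_apply_le_of_norm_le
        (norm_mul_apply_le_of_norm_le (hReal A₁ hA₁) fun i j => hQP j i) (hReal A₂ hA₂))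
      hQP
  have hAA : ‖A₁.map Complex.ofReal‖ * ‖A₂.map Complex.ofReal‖ = 2 * m := by
    simp only [frobenius_norm_map_eq _ _ Complex.norm_real, frobenius_norm_eq_sqrt,
      Real.norm_eq_abs, sq_abs, hF₁, hF₂]
    exact Real.mul_self_sqrt (by positivity)
  have hE : ‖U - Q‖ ≤ t := by rwa [frobenius_norm_eq_sqrt]
  calc _ ≤ ‖(A₁.map Complex.ofReal * Qᵀ * A₂.map Complex.ofReal * Q).trace‖
        + 2 * m * (2 * ‖U - Q‖ + ‖U - Q‖ ^ 2) :=
        hAA ▸ norm_trace_mul_transpose_mul_mul_le_add hQ _ _ _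
    _ ≤ (A₁ * Pᵀ * A₂ * P).trace + 2 * m * (2 * t + t ^ 2) := by gcongr
    _ = _ := by ring

/-- If the unitary `U` is Frobenius-close to a permutation-times-phase
matrix `P·D`, then the trace quantity `|Tr(A₁ Uᵀ A₂ U)|` is controlled by the
permutation version `Tr(A₁ Pᵀ A₂ P)` up to error terms `4mt + 2mt²`. -/
theorem trace_perturbation_bound
    {n : ℕ} (hn : 1 ≤ n) (m : ℝ) (hm : 0 < m)
    (A₁ A₂ : Matrix (Fin n) (Fin n) ℝ)
    (hA₁ : ∀ i j, 0 ≤ A₁ i j) (hA₂ : ∀ i j, 0 ≤ A₂ i j)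
    (hF₁ : Real.sqrt (∑ i, ∑ k, (A₁ i k) ^ 2) = Real.sqrt (2 * m))
    (hF₂ : Real.sqrt (∑ i, ∑ k, (A₂ i k) ^ 2) = Real.sqrt (2 * m))
    (U : Matrix (Fin n) (Fin n) ℂ)
    (hU : U ∈ Matrix.unitaryGroup (Fin n) ℂ)
    (σ : Equiv.Perm (Fin n)) (d : Fin n → ℂ) (hd : ∀ i, ‖d i‖ = 1)
    (t : ℝ) (ht : 0 ≤ t)
    (hdist : Real.sqrt (∑ i, ∑ k, ‖
        ((U - ((Matrix.of fun i j => if i = σ j then (1 : ℝ) else 0).map (Complex.ofReal) *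
          Matrix.diagonal d)) i k)‖ ^ 2) ≤ t) :
    ‖(A₁.map Complex.ofReal * Uᵀ * A₂.map Complex.ofReal * U).trace‖
      ≤ (A₁ * (Matrix.of fun i j => if i = σ j then (1 : ℝ) else 0)ᵀ * A₂ *
          (Matrix.of fun i j => if i = σ j then (1 : ℝ) else 0)).trace
        + 4 * m * t + 2 * m * t ^ 2 :=
  trace_perturbation_bound_general m hm A₁ A₂ hA₁ hA₂ hF₁ hF₂ U σ d hd t hdist
end

section
/- Let d ≥ 1, let ρ and σ be d×d density matrices, let S be a nonempty finite set of d×d complex unitary matrices, and let ε ≥ 0 be such that F(V·ρ·Vᴴ, U·σ·Uᴴ) ≤ ε for all U, V ∈ S. Define the twirling channel ℰ(X) = (1/|S|)·∑_{U∈S} U·X·Uᴴ. Then F(ℰ(ρ), ℰ(σ)) ≤ ε·|S|. -/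
open Matrix
open scoped ComplexOrder Classical

/-- The positive semidefinite square root of a matrix (junk value `0` when the
matrix is not positive semidefinite). -/
noncomputable def msqrt {d : Type*} [Fintype d] [DecidableEq d]
    (M : Matrix d d ℂ) : Matrix d d ℂ :=
  if h : M.PosSemidef then
    (h.1.eigenvectorUnitary : Matrix d d ℂ) * diagonal ((↑) ∘ (√·) ∘ h.1.eigenvalues) *
      (star h.1.eigenvectorUnitary : Matrix d d ℂ)
  else 0

/-- The square-root fidelity `F(ρ,σ) = Tr √(√ρ σ √ρ)` of two positive
semidefinite matrices. -/
noncomputable def fid {d : Type*} [Fintype d] [DecidableEq d]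
    (ρ σ : Matrix d d ℂ) : ℝ :=
  ((msqrt (msqrt ρ * σ * msqrt ρ)).trace).re

/-!
Write `F(A, B) = Tr |√B √A|`. Since `Xᴴ X` and `X Xᴴ` have the same characteristic polynomial,
`F` is symmetric. Subadditivity `Tr √(M + N) ≤ Tr √M + Tr √N` follows by splitting
`√(M + N) = B M + B N` with `B` the pseudo-inverse of `√(M + N)` and bounding each term by AM–GM;
hence `F(A, ·)` is subadditive on positive matrices. Combining with symmetry,
`F(∑ ρ_V, ∑ σ_U) ≤ ∑_{U,V} F(ρ_V, σ_U) ≤ |S|² ε`, and `F` is homogeneous of degree one,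
so dividing both states by `|S|` gives the bound `|S| ε`.
-/

open scoped MatrixOrder

lemma msqrt_eq_sqrt {n : Type*} [Fintype n] [DecidableEq n] (M : Matrix n n ℂ) :
    msqrt M = CFC.sqrt M := by
  by_cases h : M.PosSemidef
  · rw [msqrt, dif_pos h, CFC.sqrt_eq_real_sqrt M h.nonneg, cfcₙ_eq_cfc, h.1.cfc_eq,
      IsHermitian.cfc, Unitary.conjStarAlgAut_apply]
    rfl
  · rw [msqrt, dif_neg h, CFC.sqrt_of_not_nonneg (by rwa [nonneg_iff_posSemidef])]

namespace Matrix

variable {n : Type*} [Fintype n]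

lemma re_trace_le_re_trace {A B : Matrix n n ℂ} (h : A ≤ B) : A.trace.re ≤ B.trace.re := by
  simpa using (Complex.le_def.mp (le_iff.mp h).trace_nonneg).1

lemma two_mul_re_trace_conjTranspose_mul_le (X Y : Matrix n n ℂ) :
    2 * (Xᴴ * Y).trace.re ≤ (Xᴴ * X).trace.re + (Yᴴ * Y).trace.re := by
  have h := (Complex.le_def.mp (posSemidef_conjTranspose_mul_self (X - Y)).trace_nonneg).1
  have hYX : (Yᴴ * X).trace = star (Xᴴ * Y).trace := by
    rw [← trace_conjTranspose, conjTranspose_mul, conjTranspose_conjTranspose]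
  simp only [conjTranspose_sub, sub_mul, mul_sub, trace_sub, Complex.sub_re, hYX,
    Complex.star_def, Complex.conj_re, Complex.zero_re] at h
  linarith

variable [DecidableEq n]

lemma sqrt_eq_cfc_real_sqrt {M : Matrix n n ℂ} (hM : 0 ≤ M) : CFC.sqrt M = cfc Real.sqrt M := by
  rw [CFC.sqrt_eq_real_sqrt M, cfcₙ_eq_cfc]

lemma sqrt_ofReal_smul {c : ℝ} (hc : 0 ≤ c) {M : Matrix n n ℂ} (hM : 0 ≤ M) :
    CFC.sqrt ((c : ℂ) • M) = ((√c : ℝ) : ℂ) • CFC.sqrt M := by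
  refine CFC.sqrt_unique ?_ ?_
  · rw [smul_mul_smul_comm, CFC.sqrt_mul_sqrt_self M, ← Complex.ofReal_mul, Real.mul_self_sqrt hc]
  · exact ((CFC.sqrt_nonneg M).posSemidef.smul (by exact_mod_cast Real.sqrt_nonneg c)).nonneg

lemma exists_isSelfAdjoint_mul_eq_sqrt {S : Matrix n n ℂ} (hS : 0 ≤ S) :
    ∃ B : Matrix n n ℂ, IsSelfAdjoint B ∧ B * S = CFC.sqrt S ∧ B * S * B ≤ 1 := by
  have hcont (f : ℝ → ℝ) : ContinuousOn f (spectrum ℝ S) := (Set.toFinite _).continuousOn _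
  have hBS : cfc (fun x : ℝ => (√x)⁻¹) S * S = CFC.sqrt S := by
    nth_rw 2 [← cfc_id' ℝ S]
    rw [← cfc_mul _ _ S (hcont _) (hcont _), sqrt_eq_cfc_real_sqrt hS]
    exact cfc_congr fun x _ => by rw [inv_mul_eq_div, Real.div_sqrt]
  -- `B` is the Moore–Penrose inverse of `√S`; the junk value `(√0)⁻¹ = 0` is what makes it so.
  refine ⟨cfc (fun x : ℝ => (√x)⁻¹) S, cfc_predicate _ _, hBS, ?_⟩
  rw [hBS, sqrt_eq_cfc_real_sqrt hS, ← cfc_mul _ _ S (hcont _) (hcont _)]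
  exact cfc_le_one _ _ fun x _ => mul_inv_le_one

/-- AM–GM `2 Re Tr (Yᴴ Q) ≤ Tr (Yᴴ Y) + Tr (Qᴴ Q)` for `Q = M^{1/4}` and `Y = √M B Q`. -/
lemma re_trace_mul_le_re_trace_sqrt {B M : Matrix n n ℂ} (hB : IsSelfAdjoint B) (hM : 0 ≤ M)
    (h : B * M * B ≤ 1) : (B * M).trace.re ≤ (CFC.sqrt M).trace.re := by
  set R := CFC.sqrt M
  set Q := CFC.sqrt R
  have hR : Rᴴ = R := (CFC.sqrt_nonneg M).posSemidef.1
  have hQ : Qᴴ = Q := (CFC.sqrt_nonneg R).posSemidef.1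
  have hB' : Bᴴ = B := hB
  have hRR : R * R = M := CFC.sqrt_mul_sqrt_self M
  have hQQ : Q * Q = R := CFC.sqrt_mul_sqrt_self R
  have hcross : ((R * B * Q)ᴴ * Q).trace = (B * M).trace := by
    rw [conjTranspose_mul, conjTranspose_mul, hR, hB', hQ, ← hRR, ← hQQ, trace_mul_cycle,
      ← Matrix.mul_assoc, hQQ, ← trace_mul_cycle, trace_mul_comm, trace_mul_comm R,
      Matrix.mul_assoc]
  have hYY : ((R * B * Q)ᴴ * (R * B * Q)).trace.re ≤ (Qᴴ * Q).trace.re := by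
    have := star_left_conjugate_le_conjugate h Q
    rw [mul_one, star_eq_conjTranspose] at this
    convert re_trace_le_re_trace this using 3
    simp only [conjTranspose_mul, hR, hB', hQ, ← hRR, Matrix.mul_assoc]
  have hQR : (Qᴴ * Q).trace = R.trace := by rw [hQ, hQQ]
  have := two_mul_re_trace_conjTranspose_mul_le (R * B * Q) Q
  rw [hcross, hQR] at this
  rw [hQR] at hYY
  linarith

theorem trace_sqrt_add_le {M N : Matrix n n ℂ} (hM : 0 ≤ M) (hN : 0 ≤ N) :
    (CFC.sqrt (M + N)).trace.re ≤ (CFC.sqrt M).trace.re + (CFC.sqrt N).trace.re := by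
  obtain ⟨B, hB, hBS, hBSB⟩ := exists_isSelfAdjoint_mul_eq_sqrt (add_nonneg hM hN)
  have hconj (P Q : Matrix n n ℂ) (hQ : 0 ≤ Q) : B * P * B ≤ B * (P + Q) * B := by
    simpa [mul_add, add_mul] using hB.conjugate_nonneg hQ
  have hM' := re_trace_mul_le_re_trace_sqrt hB hM ((hconj M N hN).trans hBSB)
  have hN' := re_trace_mul_le_re_trace_sqrt hB hN ((add_comm M N ▸ hconj N M hM).trans hBSB)
  rw [← hBS, mul_add, trace_add, Complex.add_re]
  linarith

theorem IsHermitian.trace_cfc_eq_of_charpoly_eq {A B : Matrix n n ℂ} (hA : A.IsHermitian)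
    (hB : B.IsHermitian) (h : A.charpoly = B.charpoly) (f : ℝ → ℝ) :
    (cfc f A).trace = (cfc f B).trace := by
  have hf : (cfc f A).charpoly = (cfc f B).charpoly := by
    rw [hA.charpoly_cfc_eq, hB.charpoly_cfc_eq, (hA.eigenvalues_eq_eigenvalues_iff hB).2 h]
  rw [trace_eq_sum_roots_charpoly_of_splits (IsHermitian.splits_charpoly (cfc_predicate f A)),
    trace_eq_sum_roots_charpoly_of_splits (IsHermitian.splits_charpoly (cfc_predicate f B)), hf]

theorem trace_sqrt_conjTranspose_mul_self (X : Matrix n n ℂ) :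
    (CFC.sqrt (Xᴴ * X)).trace = (CFC.sqrt (X * Xᴴ)).trace := by
  rw [sqrt_eq_cfc_real_sqrt (posSemidef_conjTranspose_mul_self X).nonneg,
    sqrt_eq_cfc_real_sqrt (posSemidef_self_mul_conjTranspose X).nonneg]
  exact (isHermitian_conjTranspose_mul_self X).trace_cfc_eq_of_charpoly_eq
    (isHermitian_mul_conjTranspose_self X) (charpoly_mul_comm _ _) _

end Matrix

section fid

variable {n : Type*} [Fintype n] [DecidableEq n]

lemma fid_comm {A B : Matrix n n ℂ} (hA : A.PosSemidef) (hB : B.PosSemidef) :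
    fid A B = fid B A := by
  simp only [fid, msqrt_eq_sqrt]
  have hsA : (CFC.sqrt A)ᴴ = CFC.sqrt A := (CFC.sqrt_nonneg A).posSemidef.1
  have hsB : (CFC.sqrt B)ᴴ = CFC.sqrt B := (CFC.sqrt_nonneg B).posSemidef.1
  have hXX : (CFC.sqrt B * CFC.sqrt A)ᴴ * (CFC.sqrt B * CFC.sqrt A) =
      CFC.sqrt A * B * CFC.sqrt A := by
    rw [conjTranspose_mul, hsA, hsB, Matrix.mul_assoc, ← Matrix.mul_assoc (CFC.sqrt B),
      CFC.sqrt_mul_sqrt_self B hB.nonneg, Matrix.mul_assoc]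
  have hXX' : (CFC.sqrt B * CFC.sqrt A) * (CFC.sqrt B * CFC.sqrt A)ᴴ =
      CFC.sqrt B * A * CFC.sqrt B := by
    rw [conjTranspose_mul, hsA, hsB, Matrix.mul_assoc, ← Matrix.mul_assoc (CFC.sqrt A),
      CFC.sqrt_mul_sqrt_self A hA.nonneg, Matrix.mul_assoc]
  rw [← hXX, ← hXX', trace_sqrt_conjTranspose_mul_self]

lemma fid_zero_right (A : Matrix n n ℂ) : fid A 0 = 0 := by
  simp [fid, msqrt_eq_sqrt]

lemma fid_add_right_le (A : Matrix n n ℂ) {X Y : Matrix n n ℂ} (hX : X.PosSemidef)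
    (hY : Y.PosSemidef) : fid A (X + Y) ≤ fid A X + fid A Y := by
  simp only [fid, msqrt_eq_sqrt, mul_add, add_mul]
  have hsA := (CFC.sqrt_nonneg A).isSelfAdjoint
  exact trace_sqrt_add_le (hsA.conjugate_nonneg hX.nonneg) (hsA.conjugate_nonneg hY.nonneg)

lemma fid_sum_right_le {ι : Type*} (A : Matrix n n ℂ) {s : Finset ι} {X : ι → Matrix n n ℂ}
    (hX : ∀ i ∈ s, (X i).PosSemidef) : fid A (∑ i ∈ s, X i) ≤ ∑ i ∈ s, fid A (X i) :=
  Finset.le_sum_of_subadditive_on_pred (fid A) PosSemidef (fid_zero_right A).le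
    (fun _ _ => fid_add_right_le A) (fun _ _ => PosSemidef.add) X hX

theorem fid_sum_sum_le {ι κ : Type*} {s : Finset ι} {t : Finset κ} {X : ι → Matrix n n ℂ}
    {Y : κ → Matrix n n ℂ} (hX : ∀ i ∈ s, (X i).PosSemidef) (hY : ∀ j ∈ t, (Y j).PosSemidef) :
    fid (∑ i ∈ s, X i) (∑ j ∈ t, Y j) ≤ ∑ j ∈ t, ∑ i ∈ s, fid (X i) (Y j) :=
  calc fid (∑ i ∈ s, X i) (∑ j ∈ t, Y j)
      ≤ ∑ j ∈ t, fid (∑ i ∈ s, X i) (Y j) := fid_sum_right_le _ hY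
    _ = ∑ j ∈ t, fid (Y j) (∑ i ∈ s, X i) :=
      Finset.sum_congr rfl fun j hj => fid_comm (posSemidef_sum s hX) (hY j hj)
    _ ≤ ∑ j ∈ t, ∑ i ∈ s, fid (Y j) (X i) := Finset.sum_le_sum fun _ _ => fid_sum_right_le _ hX
    _ = ∑ j ∈ t, ∑ i ∈ s, fid (X i) (Y j) :=
      Finset.sum_congr rfl fun j hj => Finset.sum_congr rfl fun i hi =>
        fid_comm (hY j hj) (hX i hi)

lemma fid_ofReal_smul {c : ℝ} (hc : 0 ≤ c) {A B : Matrix n n ℂ} (hA : A.PosSemidef)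
    (hB : B.PosSemidef) : fid ((c : ℂ) • A) ((c : ℂ) • B) = c * fid A B := by
  simp only [fid, msqrt_eq_sqrt]
  have hsc : ((√c : ℝ) : ℂ) * ((√c : ℝ) : ℂ) = c := by exact_mod_cast Real.mul_self_sqrt hc
  have hscale : ((√c : ℝ) : ℂ) • CFC.sqrt A * ((c : ℂ) • B) * (((√c : ℝ) : ℂ) • CFC.sqrt A) =
      ((c ^ 2 : ℝ) : ℂ) • (CFC.sqrt A * B * CFC.sqrt A) := by
    simp only [smul_mul_assoc, mul_smul_comm, smul_smul]
    congr 1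
    push_cast
    linear_combination (c : ℂ) * hsc
  have hsA := (CFC.sqrt_nonneg A).isSelfAdjoint
  rw [sqrt_ofReal_smul hc hA.nonneg, hscale,
    sqrt_ofReal_smul (sq_nonneg c) (hsA.conjugate_nonneg hB.nonneg), Real.sqrt_sq hc,
    trace_smul, smul_eq_mul, Complex.re_ofReal_mul]

end fid

theorem fidelity_of_twirls_le_general
    {d : ℕ}
    (ρ σ : Matrix (Fin d) (Fin d) ℂ)
    (hρ : ρ.PosSemidef)
    (hσ : σ.PosSemidef)
    (S : Finset (Matrix (Fin d) (Fin d) ℂ))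
    (ε : ℝ)
    (hfar : ∀ U ∈ S, ∀ V ∈ S, fid (V * ρ * Vᴴ) (U * σ * Uᴴ) ≤ ε) :
    fid (((S.card : ℂ))⁻¹ • ∑ U ∈ S, U * ρ * Uᴴ)
        (((S.card : ℂ))⁻¹ • ∑ U ∈ S, U * σ * Uᴴ) ≤ ε * S.card := by
  have hρS : ∀ U ∈ S, (U * ρ * Uᴴ).PosSemidef := fun U _ => hρ.mul_mul_conjTranspose_same U
  have hσS : ∀ U ∈ S, (U * σ * Uᴴ).PosSemidef := fun U _ => hσ.mul_mul_conjTranspose_same U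
  have hcard : ((S.card : ℂ))⁻¹ = (((S.card : ℝ)⁻¹ : ℝ) : ℂ) := by push_cast; rfl
  rw [hcard, fid_ofReal_smul (by positivity) (posSemidef_sum S hρS) (posSemidef_sum S hσS)]
  calc ((S.card : ℝ))⁻¹ * fid (∑ U ∈ S, U * ρ * Uᴴ) (∑ U ∈ S, U * σ * Uᴴ)
      ≤ ((S.card : ℝ))⁻¹ * ∑ _U ∈ S, ∑ _V ∈ S, ε := by
        gcongr
        exact (fid_sum_sum_le hρS hσS).trans
          (Finset.sum_le_sum fun U hU => Finset.sum_le_sum fun V hV => hfar U hU V hV)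
    _ = ε * S.card := by
        rcases S.eq_empty_or_nonempty with rfl | _
        · simp
        · simp only [Finset.sum_const, nsmul_eq_mul]
          field_simp

/-- union bound for fidelities of twirled states. -/
theorem fidelity_of_twirls_le
    {d : ℕ} (hd : 1 ≤ d)
    (ρ σ : Matrix (Fin d) (Fin d) ℂ)
    (hρ : ρ.PosSemidef) (hρtr : ρ.trace = 1)
    (hσ : σ.PosSemidef) (hσtr : σ.trace = 1)
    (S : Finset (Matrix (Fin d) (Fin d) ℂ)) (hS : S.Nonempty)
    (hSU : ∀ U ∈ S, U ∈ Matrix.unitaryGroup (Fin d) ℂ)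
    (ε : ℝ) (hε : 0 ≤ ε)
    (hfar : ∀ U ∈ S, ∀ V ∈ S, fid (V * ρ * Vᴴ) (U * σ * Uᴴ) ≤ ε) :
    fid (((S.card : ℂ))⁻¹ • ∑ U ∈ S, U * ρ * Uᴴ)
        (((S.card : ℂ))⁻¹ • ∑ U ∈ S, U * σ * Uᴴ) ≤ ε * S.card :=
  fidelity_of_twirls_le_general ρ σ hρ hσ S ε hfar
end

section
/- Let n ≥ 1, let σ > 0 be real, and let u, v ∈ ℝⁿ. Let μ be the product measure on ℝⁿ whose i-th factor is the real Gaussian measure with mean u_i and variance σ², and let ν be the analogous product measure with means v_i. Then for every measurable set A ⊆ ℝⁿ, |μ(A) − ν(A)| ≤ ‖u − v‖₂/(2σ), where ‖u − v‖₂ = √(∑_i (u_i − v_i)²). In particular, the total variation distance between the two isotropic Gaussian measures with common covariance σ²·I and means u, v is at most ‖u − v‖₂/(2σ). -/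
/-!
Both product measures have densities `f = ∏ φ_{u_i}` and `g = ∏ φ_{v_i}` with respect to
Lebesgue measure, and `|μ(A) - ν(A)| ≤ ½ ∫ |f - g|`. For probability densities, Cauchy–Schwarz
applied to `|f - g| = |√f - √g| (√f + √g)` gives `∫ |f - g| ≤ 2 √(1 - ρ²)` with the Bhattacharyya
coefficient `ρ = ∫ √f √g`. Completing the square, `√(φ_a φ_b) = exp(-(a - b)²/(8σ²)) φ_{(a+b)/2}`,
so `ρ = exp(-‖u - v‖²/(8σ²))` and `1 - ρ² ≤ ‖u - v‖²/(4σ²)`.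
-/

open MeasureTheory ProbabilityTheory
open scoped ENNReal NNReal

theorem Real.abs_sqrt_sub_sqrt_mul_sqrt_add_sqrt {a b : ℝ} (ha : 0 ≤ a) (hb : 0 ≤ b) :
    |√a - √b| * (√a + √b) = |a - b| := by
  rw [← abs_of_nonneg (by positivity : 0 ≤ √a + √b), ← abs_mul]
  congr 1
  nlinarith [Real.sq_sqrt ha, Real.sq_sqrt hb]

theorem Real.sqrt_one_sub_exp_neg_sq_le (t : ℝ) : √(1 - Real.exp (-t) ^ 2) ≤ √(2 * t) := by
  refine Real.sqrt_le_sqrt ?_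
  have h : Real.exp (-t) ^ 2 = Real.exp (-(2 * t)) := by
    rw [← Real.exp_nat_mul]
    ring_nf
  linarith [Real.one_sub_le_exp_neg (2 * t)]

namespace MeasureTheory

section PiLintegral

variable {E : Type*} [MeasurableSpace E]

theorem lintegral_fin_nat_prod_eq_prod {n : ℕ} {μ : Fin n → Measure E}
    [∀ i, SigmaFinite (μ i)] {f : Fin n → E → ℝ≥0∞} (hf : ∀ i, Measurable (f i)) :
    ∫⁻ x : Fin n → E, ∏ i, f i (x i) ∂(Measure.pi μ) = ∏ i, ∫⁻ x, f i x ∂(μ i) := by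
  induction n with
  | zero => simp
  | succ n ih =>
      rw [← ((measurePreserving_piFinSuccAbove μ 0).symm).lintegral_comp_emb
        (MeasurableEquiv.measurableEmbedding _)]
      simp_rw [MeasurableEquiv.piFinSuccAbove_symm_apply, Fin.insertNthEquiv,
        Fin.prod_univ_succ, Fin.insertNth_zero, Equiv.coe_fn_mk, Fin.cons_succ,
        Fin.zero_succAbove, cast_eq, Fin.cons_zero]
      rw [lintegral_prod_mul (f := f 0) (g := fun y : Fin n → E => ∏ i, f i.succ (y i))
        (hf 0).aemeasurable
        (Finset.measurable_prod _ fun (i : Fin n) _ =>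
          (hf i.succ).comp (measurable_pi_apply i)).aemeasurable,
        ih fun i => hf i.succ]

theorem lintegral_fintype_prod_eq_prod {ι : Type*} [Fintype ι] {μ : ι → Measure E}
    [∀ i, SigmaFinite (μ i)] {f : ι → E → ℝ≥0∞} (hf : ∀ i, Measurable (f i)) :
    ∫⁻ x : ι → E, ∏ i, f i (x i) ∂(Measure.pi μ) = ∏ i, ∫⁻ x, f i x ∂(μ i) := by
  let e := (Fintype.equivFin ι).symm
  rw [← (measurePreserving_piCongrLeft μ e).lintegral_comp_emb
    (MeasurableEquiv.measurableEmbedding _)]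
  simp_rw [← e.prod_comp, MeasurableEquiv.coe_piCongrLeft, Equiv.piCongrLeft_apply_apply]
  exact lintegral_fin_nat_prod_eq_prod fun i => hf (e i)

theorem Measure.pi_withDensity {ι : Type*} [Fintype ι] {μ : ι → Measure E}
    [∀ i, SigmaFinite (μ i)] {f : ι → E → ℝ≥0∞} (hf : ∀ i, Measurable (f i))
    [∀ i, SigmaFinite ((μ i).withDensity (f i))] :
    Measure.pi (fun i => (μ i).withDensity (f i)) =
      (Measure.pi μ).withDensity (fun x => ∏ i, f i (x i)) := by
  refine Measure.pi_eq fun s hs => ?_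
  have hbox : MeasurableSet (Set.univ.pi s) := .univ_pi hs
  rw [withDensity_apply _ hbox, ← lintegral_indicator hbox]
  have hind : (Set.univ.pi s).indicator (fun x => ∏ i, f i (x i)) =
      fun x => ∏ i, (s i).indicator (f i) (x i) := by
    ext x
    classical
    simp only [Set.indicator, Set.mem_univ_pi, Fintype.prod_ite_zero]
  rw [hind, lintegral_fintype_prod_eq_prod fun i => (hf i).indicator (hs i)]
  simp_rw [lintegral_indicator (hs _), withDensity_apply _ (hs _)]

end PiLintegral

section Hellinger

variable {α : Type*} [MeasurableSpace α] {μ : Measure α} {f g : α → ℝ}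

theorem integral_mul_le_sqrt_mul_sqrt_of_nonneg (hf0 : 0 ≤ᵐ[μ] f) (hg0 : 0 ≤ᵐ[μ] g)
    (hf : MemLp f 2 μ) (hg : MemLp g 2 μ) :
    ∫ x, f x * g x ∂μ ≤ √(∫ x, f x ^ 2 ∂μ) * √(∫ x, g x ^ 2 ∂μ) := by
  have h := integral_mul_le_Lp_mul_Lq_of_nonneg Real.HolderConjugate.two_two hf0 hg0
    (by simpa using hf) (by simpa using hg)
  simp only [Real.rpow_two] at h
  rwa [Real.sqrt_eq_rpow, Real.sqrt_eq_rpow]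

theorem abs_setIntegral_sub_le_half_integral_abs_sub (hf : Integrable f μ)
    (hg : Integrable g μ) (hfg : ∫ x, f x ∂μ = ∫ x, g x ∂μ) {s : Set α}
    (hs : MeasurableSet s) :
    |(∫ x in s, f x ∂μ) - ∫ x in s, g x ∂μ| ≤ (∫ x, |f x - g x| ∂μ) / 2 := by
  have hd : Integrable (fun x => f x - g x) μ := hf.sub hg
  have hsum : ∫ x in s, f x - g x ∂μ + ∫ x in sᶜ, f x - g x ∂μ = 0 := by
    rw [integral_add_compl hs hd, integral_sub hf hg, hfg, sub_self]
  have habs : ∫ x in s, |f x - g x| ∂μ + ∫ x in sᶜ, |f x - g x| ∂μ = ∫ x, |f x - g x| ∂μ :=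
    integral_add_compl hs hd.abs
  have hin := abs_le.1 <|
    abs_integral_le_integral_abs (μ := μ.restrict s) (f := fun x => f x - g x)
  have hout := abs_le.1 <|
    abs_integral_le_integral_abs (μ := μ.restrict sᶜ) (f := fun x => f x - g x)
  rw [← integral_sub hf.integrableOn hg.integrableOn, abs_le]
  constructor <;> linarith [hin.1, hin.2, hout.1, hout.2]

theorem integral_abs_sub_le_two_mul_sqrt_one_sub_sq (hf0 : 0 ≤ f) (hg0 : 0 ≤ g)
    (hf : Integrable f μ) (hg : Integrable g μ) (hf1 : ∫ x, f x ∂μ = 1)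
    (hg1 : ∫ x, g x ∂μ = 1) :
    ∫ x, |f x - g x| ∂μ ≤ 2 * √(1 - (∫ x, √(f x) * √(g x) ∂μ) ^ 2) := by
  set ρ := ∫ x, √(f x) * √(g x) ∂μ
  have hsqrt_memLp : ∀ {h : α → ℝ}, 0 ≤ h → Integrable h μ → MemLp (fun x => √(h x)) 2 μ :=
    fun {h} h0 hint => (memLp_two_iff_integrable_sq
      (Real.continuous_sqrt.comp_aestronglyMeasurable hint.1)).2
      (hint.congr (.of_forall fun x => (Real.sq_sqrt (h0 x)).symm))
  have hsf := hsqrt_memLp hf0 hf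
  have hsg := hsqrt_memLp hg0 hg
  have hρ : Integrable (fun x => √(f x) * √(g x)) μ := hsf.integrable_mul hsg
  have hfg : Integrable (fun x => f x + g x) μ := hf.add hg
  have hdiff : ∫ x, |√(f x) - √(g x)| ^ 2 ∂μ = 2 - 2 * ρ := by
    have h (x) : |√(f x) - √(g x)| ^ 2 = f x + g x - 2 * (√(f x) * √(g x)) := by
      rw [sq_abs, sub_sq, Real.sq_sqrt (hf0 x), Real.sq_sqrt (hg0 x)]
      ring
    simp_rw [h]
    rw [integral_sub hfg (hρ.const_mul 2), integral_add hf hg, integral_const_mul, hf1, hg1]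
    ring
  have hsum : ∫ x, (√(f x) + √(g x)) ^ 2 ∂μ = 2 + 2 * ρ := by
    have h (x) : (√(f x) + √(g x)) ^ 2 = f x + g x + 2 * (√(f x) * √(g x)) := by
      rw [add_sq, Real.sq_sqrt (hf0 x), Real.sq_sqrt (hg0 x)]
      ring
    simp_rw [h]
    rw [integral_add hfg (hρ.const_mul 2), integral_add hf hg, integral_const_mul, hf1, hg1]
    ring
  have hρ_le : 0 ≤ 2 - 2 * ρ := hdiff ▸ integral_nonneg fun _ => sq_nonneg _
  calc ∫ x, |f x - g x| ∂μ = ∫ x, |√(f x) - √(g x)| * (√(f x) + √(g x)) ∂μ := by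
        simp_rw [Real.abs_sqrt_sub_sqrt_mul_sqrt_add_sqrt (hf0 _) (hg0 _)]
    _ ≤ √(∫ x, |√(f x) - √(g x)| ^ 2 ∂μ) * √(∫ x, (√(f x) + √(g x)) ^ 2 ∂μ) :=
        integral_mul_le_sqrt_mul_sqrt_of_nonneg (.of_forall fun _ => abs_nonneg _)
          (.of_forall fun _ => by positivity) (hsf.sub hsg).abs (hsf.add hsg)
    _ = 2 * √(1 - ρ ^ 2) := by
        rw [hdiff, hsum, ← Real.sqrt_mul hρ_le,
          show (2 - 2 * ρ) * (2 + 2 * ρ) = 2 ^ 2 * (1 - ρ ^ 2) by ring,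
          Real.sqrt_mul (by norm_num), Real.sqrt_sq zero_le_two]

end Hellinger

end MeasureTheory

namespace ProbabilityTheory

theorem sqrt_gaussianPDFReal_mul_sqrt_gaussianPDFReal (a b : ℝ) (v : ℝ≥0) (x : ℝ) :
    √(gaussianPDFReal a v x) * √(gaussianPDFReal b v x) =
      Real.exp (-(a - b) ^ 2 / (8 * v)) * gaussianPDFReal ((a + b) / 2) v x := by
  rcases eq_or_ne v 0 with rfl | hv
  · simp
  have hv_pos : (0 : ℝ) < v := by positivity
  simp only [gaussianPDFReal]
  rw [← Real.sqrt_mul (by positivity), mul_mul_mul_comm, ← Real.exp_add,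
    Real.sqrt_mul (by positivity), Real.sqrt_mul_self (by positivity), ← Real.exp_half,
    mul_left_comm, ← Real.exp_add]
  congr 2
  field_simp
  ring

variable {ι : Type*} [Fintype ι]

noncomputable def gaussianPDFRealPi (m : ι → ℝ) (v : ℝ≥0) (x : ι → ℝ) : ℝ :=
  ∏ i, gaussianPDFReal (m i) v (x i)

theorem gaussianPDFRealPi_nonneg (m : ι → ℝ) (v : ℝ≥0) (x : ι → ℝ) :
    0 ≤ gaussianPDFRealPi m v x :=
  Finset.prod_nonneg fun _ _ => gaussianPDFReal_nonneg _ _ _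

theorem integrable_gaussianPDFRealPi (m : ι → ℝ) (v : ℝ≥0) :
    Integrable (gaussianPDFRealPi m v) := by
  rw [volume_pi]
  exact .fintype_prod fun i => integrable_gaussianPDFReal (m i) v

theorem integral_gaussianPDFRealPi_eq_one (m : ι → ℝ) {v : ℝ≥0} (hv : v ≠ 0) :
    ∫ x, gaussianPDFRealPi m v x = 1 := by
  simp [gaussianPDFRealPi, integral_fintype_prod_volume_eq_prod,
    integral_gaussianPDFReal_eq_one _ hv]

theorem pi_gaussianReal_eq_withDensity (m : ι → ℝ) {v : ℝ≥0} (hv : v ≠ 0) :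
    Measure.pi (fun i => gaussianReal (m i) v) =
      volume.withDensity fun x => ENNReal.ofReal (gaussianPDFRealPi m v x) := by
  have (i : ι) : SigmaFinite (volume.withDensity (gaussianPDF (m i) v)) := by
    rw [← gaussianReal_of_var_ne_zero _ hv]
    infer_instance
  simp_rw [gaussianReal_of_var_ne_zero _ hv]
  rw [Measure.pi_withDensity fun i => measurable_gaussianPDF _ _, volume_pi]
  simp_rw [gaussianPDFRealPi,
    ENNReal.ofReal_prod_of_nonneg fun i _ => gaussianPDFReal_nonneg _ _ _]
  rfl

theorem measureReal_pi_gaussianReal (m : ι → ℝ) {v : ℝ≥0} (hv : v ≠ 0) {s : Set (ι → ℝ)}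
    (hs : MeasurableSet s) :
    (Measure.pi fun i => gaussianReal (m i) v).real s = ∫ x in s, gaussianPDFRealPi m v x := by
  rw [measureReal_def, pi_gaussianReal_eq_withDensity m hv, withDensity_apply _ hs,
    integral_eq_lintegral_of_nonneg_ae (.of_forall (gaussianPDFRealPi_nonneg m v))
      (integrable_gaussianPDFRealPi m v).1.restrict]

theorem integral_sqrt_gaussianPDFRealPi_mul_sqrt (a b : ι → ℝ) {v : ℝ≥0} (hv : v ≠ 0) :
    ∫ x, √(gaussianPDFRealPi a v x) * √(gaussianPDFRealPi b v x) =
      Real.exp (-(∑ i, (a i - b i) ^ 2) / (8 * v)) := by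
  simp_rw [gaussianPDFRealPi, Real.sqrt_prod _ fun i _ => gaussianPDFReal_nonneg _ _ _,
    ← Finset.prod_mul_distrib, sqrt_gaussianPDFReal_mul_sqrt_gaussianPDFReal]
  rw [integral_fintype_prod_volume_eq_prod
    (fun i y => Real.exp (-(a i - b i) ^ 2 / (8 * v)) * gaussianPDFReal ((a i + b i) / 2) v y)]
  simp_rw [integral_const_mul, integral_gaussianPDFReal_eq_one _ hv, mul_one, ← Real.exp_sum,
    ← Finset.sum_neg_distrib, Finset.sum_div]

end ProbabilityTheory

theorem gaussian_product_tv_bound_general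
    {n : ℕ} (σ : ℝ) (hσ : 0 < σ) (u v : Fin n → ℝ)
    (A : Set (Fin n → ℝ)) (hA : MeasurableSet A) :
    |(Measure.pi (fun i => gaussianReal (u i) (Real.toNNReal (σ ^ 2))) A).toReal -
        (Measure.pi (fun i => gaussianReal (v i) (Real.toNNReal (σ ^ 2))) A).toReal|
      ≤ Real.sqrt (∑ i, (u i - v i) ^ 2) / (2 * σ) := by
  set V := Real.toNNReal (σ ^ 2)
  have hV : (V : ℝ) = σ ^ 2 := Real.coe_toNNReal _ (sq_nonneg σ)
  have hV0 : V ≠ 0 := by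
    rw [← NNReal.coe_ne_zero, hV]
    positivity
  set S := ∑ i, (u i - v i) ^ 2
  have hu := integral_gaussianPDFRealPi_eq_one u hV0
  have hv := integral_gaussianPDFRealPi_eq_one v hV0
  have hL1 := integral_abs_sub_le_two_mul_sqrt_one_sub_sq (gaussianPDFRealPi_nonneg u V)
    (gaussianPDFRealPi_nonneg v V) (integrable_gaussianPDFRealPi u V)
    (integrable_gaussianPDFRealPi v V) hu hv
  rw [integral_sqrt_gaussianPDFRealPi_mul_sqrt u v hV0, neg_div] at hL1
  calc _ = |(∫ x in A, gaussianPDFRealPi u V x) - ∫ x in A, gaussianPDFRealPi v V x| := by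
        rw [← measureReal_def, ← measureReal_def, measureReal_pi_gaussianReal u hV0 hA,
          measureReal_pi_gaussianReal v hV0 hA]
    _ ≤ (∫ x, |gaussianPDFRealPi u V x - gaussianPDFRealPi v V x|) / 2 :=
        abs_setIntegral_sub_le_half_integral_abs_sub (integrable_gaussianPDFRealPi u V)
          (integrable_gaussianPDFRealPi v V) (hu.trans hv.symm) hA
    _ ≤ √(1 - Real.exp (-(S / (8 * V))) ^ 2) := by linarith
    _ ≤ √(2 * (S / (8 * V))) := Real.sqrt_one_sub_exp_neg_sq_le _
    _ = √S / (2 * σ) := by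
        rw [hV, show 2 * (S / (8 * σ ^ 2)) = S / (2 * σ) ^ 2 by ring,
          Real.sqrt_div' _ (sq_nonneg _), Real.sqrt_sq (by positivity)]

/-- the total variation distance between two isotropic Gaussian
product measures on ℝⁿ with common variance σ² and means u, v is at most
`‖u − v‖₂ / (2σ)`. -/
theorem gaussian_product_tv_bound
    {n : ℕ} (hn : 1 ≤ n) (σ : ℝ) (hσ : 0 < σ) (u v : Fin n → ℝ)
    (A : Set (Fin n → ℝ)) (hA : MeasurableSet A) :
    |(Measure.pi (fun i => gaussianReal (u i) (Real.toNNReal (σ ^ 2))) A).toReal -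
        (Measure.pi (fun i => gaussianReal (v i) (Real.toNNReal (σ ^ 2))) A).toReal|
      ≤ Real.sqrt (∑ i, (u i - v i) ^ 2) / (2 * σ) :=
  gaussian_product_tv_bound_general σ hσ u v A hA
end

section
/- Let n ≥ 1, let C be a 2ⁿ×2ⁿ complex unitary matrix (rows and columns indexed by bit strings x : Fin n → Fin 2), and let π be a permutation of Fin n. For i ∈ Fin n let Z_i be the diagonal matrix with (Z_i)_{x,x} = (−1)^{x(i)}. If Cᴴ·Z_i·C = Z_{π(i)} for every i ∈ Fin n, then there exist a permutation τ of Fin n and a diagonal matrix D all of whose diagonal entries have modulus 1 such that C = U_τ·D, where U_τ is the qubit-permutation unitary. -/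
open Matrix

/-! A unitary `C` with `Cᴴ Z_i C = Z_{π i}` satisfies `Z_i C = C Z_{π i}`, so comparing the
`(x, y)` entries gives `(-1)^(x i) = (-1)^(y (π i))` wherever `C x y ≠ 0`. Hence every column `y`
of `C` is supported on the single row `y ∘ π`, and unitarity forces that entry to have modulus 1. -/

lemma neg_one_pow_fin_two_injective : Function.Injective fun k : Fin 2 => (-1 : ℂ) ^ (k : ℕ) := by
  intro a b h
  fin_cases a <;> fin_cases b <;> norm_num at h <;> rfl

lemma mul_eq_mul_of_star_mul_mul_eq {R : Type*} [Monoid R] [StarMul R] {U a b : R}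
    (hU : U ∈ unitary R) (h : star U * a * U = b) : a * U = U * b := by
  rw [← h, ← mul_assoc, ← mul_assoc, Unitary.mul_star_self_of_mem hU, one_mul]

namespace Matrix

variable {m n R : Type*}

lemma eq_of_diagonal_mul_eq_mul_diagonal [Fintype m] [Fintype n] [DecidableEq m] [DecidableEq n]
    [CommRing R] [NoZeroDivisors R] {a : m → R} {b : n → R} {M : Matrix m n R}
    (h : diagonal a * M = M * diagonal b) {x : m} {y : n} (hxy : M x y ≠ 0) : a x = b y := by
  have hxy' := congrFun₂ h x y
  rw [diagonal_mul, mul_diagonal, mul_comm (a x)] at hxy'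
  exact mul_left_cancel₀ hxy hxy'

lemma eq_graph_mul_diagonal_of_apply_eq_zero [Fintype n] [DecidableEq m] [DecidableEq n]
    [Semiring R] (f : n → m) {M : Matrix m n R} (hM : ∀ x y, x ≠ f y → M x y = 0) :
    M = (of fun x y => if x = f y then (1 : R) else 0) * diagonal fun y => M (f y) y := by
  ext x y
  rw [mul_diagonal, of_apply]
  by_cases hxy : x = f y
  · simp [hxy]
  · simp [hxy, hM x y hxy]

lemma norm_apply_eq_one_of_mem_unitaryGroup [Fintype n] [DecidableEq n] {𝕜 : Type*} [RCLike 𝕜]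
    {U : Matrix n n 𝕜} (hU : U ∈ unitaryGroup n 𝕜) {x y : n}
    (hcol : ∀ x', x' ≠ x → U x' y = 0) : ‖U x y‖ = 1 := by
  have hyy := congrFun₂ (mem_unitaryGroup_iff'.mp hU) y y
  rw [mul_apply, Finset.sum_eq_single x (fun x' _ hx' => by simp [hcol x' hx'])
    (fun hx => absurd (Finset.mem_univ x) hx), one_apply_eq, star_apply, RCLike.star_def,
    RCLike.conj_mul] at hyy
  exact (pow_eq_one_iff_of_nonneg (norm_nonneg _) two_ne_zero).mp (by exact_mod_cast hyy)

end Matrix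

theorem clifford_permuting_Z_is_perm_times_diagonal_general
    {n : ℕ} (C : Matrix (Fin n → Fin 2) (Fin n → Fin 2) ℂ)
    (hC : C ∈ Matrix.unitaryGroup (Fin n → Fin 2) ℂ)
    (π : Equiv.Perm (Fin n))
    (hconj : ∀ i : Fin n,
      Cᴴ * Matrix.diagonal (fun x : Fin n → Fin 2 => ((-1 : ℂ)) ^ ((x i : ℕ))) * C
        = Matrix.diagonal (fun x : Fin n → Fin 2 => ((-1 : ℂ)) ^ ((x (π i) : ℕ)))) :
    ∃ (τ : Equiv.Perm (Fin n)) (d : (Fin n → Fin 2) → ℂ),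
      (∀ x, ‖d x‖ = 1) ∧
      C = (Matrix.of fun x y : Fin n → Fin 2 => if x = y ∘ τ then (1 : ℂ) else 0) *
            Matrix.diagonal d := by
  have hsupp : ∀ x y, x ≠ y ∘ π → C x y = 0 := by
    intro x y hxy
    by_contra hne
    refine hxy (funext fun i => neg_one_pow_fin_two_injective ?_)
    exact eq_of_diagonal_mul_eq_mul_diagonal (mul_eq_mul_of_star_mul_mul_eq hC (hconj i)) hne
  exact ⟨π, fun y => C (y ∘ π) y,
    fun y => norm_apply_eq_one_of_mem_unitaryGroup hC fun x hx => hsupp x y hx,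
    eq_graph_mul_diagonal_of_apply_eq_zero (· ∘ π) hsupp⟩

/-- a unitary conjugating every `Z_i` to `Z_{π(i)}` is a qubit
permutation unitary times a diagonal phase matrix. -/
theorem clifford_permuting_Z_is_perm_times_diagonal
    {n : ℕ} (hn : 1 ≤ n) (C : Matrix (Fin n → Fin 2) (Fin n → Fin 2) ℂ)
    (hC : C ∈ Matrix.unitaryGroup (Fin n → Fin 2) ℂ)
    (π : Equiv.Perm (Fin n))
    (hconj : ∀ i : Fin n,
      Cᴴ * Matrix.diagonal (fun x : Fin n → Fin 2 => ((-1 : ℂ)) ^ ((x i : ℕ))) * C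
        = Matrix.diagonal (fun x : Fin n → Fin 2 => ((-1 : ℂ)) ^ ((x (π i) : ℕ)))) :
    ∃ (τ : Equiv.Perm (Fin n)) (d : (Fin n → Fin 2) → ℂ),
      (∀ x, ‖d x‖ = 1) ∧
      C = (Matrix.of fun x y : Fin n → Fin 2 => if x = y ∘ τ then (1 : ℂ) else 0) *
            Matrix.diagonal d :=
  clifford_permuting_Z_is_perm_times_diagonal_general C hC π hconj
end

section
/- Let n ≥ 1, let A₁, A₂ be adjacency matrices on Fin n with graph states G₁ = |G_{A₁}⟩ and G₂ = |G_{A₂}⟩, and define vectors ψ₁, ψ₂ indexed by Fin 2 × (Fin n → Fin 2) by ψ_j(b,x) = (R(b)·R^n(x) + R_-(b)·G_j(x))/√2 for j = 1,2. Let C be a unitary matrix on this index type and let s be a real number with 0 ≤ s ≤ 10⁻⁵ such that |⟨R ⊗ R^n, C·(R_- ⊗ G₂)⟩| ≤ s and |⟨R_- ⊗ G₁, C·(R ⊗ R^n)⟩| ≤ s, where (w ⊗ φ)(b,x) = w(b)·φ(x). If |⟨ψ₁, C·ψ₂⟩| ≥ 0.99999, then |⟨R ⊗ R^n, C·(R ⊗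 R^n)⟩|² ≥ 0.9999. -/
open Matrix
open scoped Classical

/-- The single-qubit state `|R⟩ = (|0⟩ + e^{iπ/8}|1⟩)/√2`. -/
noncomputable def Rvec : Fin 2 → ℂ :=
  ![1 / (Real.sqrt 2 : ℂ), Complex.exp (Real.pi * Complex.I / 8) / (Real.sqrt 2 : ℂ)]

/-- The single-qubit state `|R₋⟩ = (|0⟩ − e^{iπ/8}|1⟩)/√2`. -/
noncomputable def Rmvec : Fin 2 → ℂ :=
  ![1 / (Real.sqrt 2 : ℂ), -(Complex.exp (Real.pi * Complex.I / 8)) / (Real.sqrt 2 : ℂ)]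

/-- The product state `|R^n⟩`. -/
noncomputable def Rn {n : ℕ} : (Fin n → Fin 2) → ℂ := fun x => ∏ i, Rvec (x i)

/-- The graph state of an adjacency matrix `A`:
`G_A(x) = (−1)^{∑_{j<k} A_{jk} x_j x_k} / 2^{n/2}`. -/
noncomputable def graphState {n : ℕ} (A : Matrix (Fin n) (Fin n) ℝ) :
    (Fin n → Fin 2) → ℂ :=
  fun x => ((-1 : ℂ)) ^
      (∑ j : Fin n, ∑ k : Fin n,
        if j < k ∧ A j k = 1 ∧ x j = 1 ∧ x k = 1 then (1 : ℕ) else 0)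
    / ((Real.sqrt 2 : ℂ)) ^ n

/-- Tensor product of a one-qubit vector with an `n`-qubit vector. -/
noncomputable def tp {n : ℕ} (w : Fin 2 → ℂ) (φ : (Fin n → Fin 2) → ℂ) :
    Fin 2 × (Fin n → Fin 2) → ℂ :=
  fun p => w p.1 * φ p.2

/-- The inner product `⟨u, w⟩ = ∑ z conj(u z) · w z`. -/
noncomputable def inn {α : Type*} [Fintype α] (u w : α → ℂ) : ℂ :=
  ∑ z, (starRingEnd ℂ) (u z) * w z

open scoped Classical

/-! Writing `u = R ⊗ R^n` and `vⱼ = R₋ ⊗ Gⱼ`, we have `ψⱼ = (u + vⱼ)/√2`, so `⟨ψ₁, C ψ₂⟩` is half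
the sum of `⟨u, C u⟩`, the two cross terms (each of norm at most `s`) and `⟨v₁, C v₂⟩`, which has
norm at most `1` because `C` is unitary and `v₁, v₂` are unit vectors. Hence
`|⟨u, C u⟩| ≥ 2 · 0.99999 - 2s - 1 ≥ 0.99996`. -/

lemma inn_eq_inner {α : Type*} [Fintype α] (u w : α → ℂ) :
    inn u w = inner ℂ (WithLp.toLp 2 u : EuclideanSpace ℂ α) (WithLp.toLp 2 w) := by
  simp only [inn, EuclideanSpace.inner_toLp_toLp, dotProduct, Pi.star_apply,
    Complex.star_def, mul_comm]

lemma inn_add_add {α : Type*} [Fintype α] (x y z w : α → ℂ) :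
    inn (x + y) (z + w) = inn x z + inn x w + inn y z + inn y w := by
  simp only [inn_eq_inner, WithLp.toLp_add, inner_add_left, inner_add_right]
  ring

lemma inn_smul_smul_ofReal {α : Type*} [Fintype α] (r : ℝ) (x y : α → ℂ) :
    inn ((r : ℂ) • x) ((r : ℂ) • y) = (r : ℂ) ^ 2 * inn x y := by
  simp only [inn_eq_inner, WithLp.toLp_smul, inner_smul_left, inner_smul_right,
    Complex.conj_ofReal]
  ring

lemma inn_mulVec_mulVec_of_mem_unitaryGroup {α : Type*} [Fintype α] [DecidableEq α]
    {C : Matrix α α ℂ} (hC : C ∈ unitaryGroup α ℂ) (v : α → ℂ) :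
    inn (C *ᵥ v) (C *ᵥ v) = inn v v := by
  rw [inn_eq_inner, inn_eq_inner, EuclideanSpace.inner_toLp_toLp, star_mulVec, dotProduct_comm,
    ← dotProduct_mulVec, mulVec_mulVec, ← star_eq_conjTranspose, hC.1, one_mulVec,
    dotProduct_comm, EuclideanSpace.inner_toLp_toLp]

lemma norm_inn_le_one {α : Type*} [Fintype α] {u w : α → ℂ}
    (hu : inn u u = 1) (hw : inn w w = 1) : ‖inn u w‖ ≤ 1 := by
  have norm_eq_one {v : α → ℂ} (hv : inn v v = 1) :
      ‖(WithLp.toLp 2 v : EuclideanSpace ℂ α)‖ = 1 := by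
    rw [norm_eq_sqrt_re_inner (𝕜 := ℂ), ← inn_eq_inner, hv]
    simp
  simpa [← inn_eq_inner, norm_eq_one hu, norm_eq_one hw] using
    norm_inner_le_norm (𝕜 := ℂ) (WithLp.toLp 2 u : EuclideanSpace ℂ α) (WithLp.toLp 2 w)

lemma inn_self_of_forall_norm_eq {α : Type*} [Fintype α] {u : α → ℂ} {r : ℝ}
    (h : ∀ z, ‖u z‖ = r) : inn u u = Fintype.card α * (r : ℂ) ^ 2 := by
  simp [inn, Complex.conj_mul', h, Finset.sum_const]

lemma norm_Rmvec (b : Fin 2) : ‖Rmvec b‖ = (√2)⁻¹ := by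
  fin_cases b <;>
    simp [Rmvec, Complex.norm_exp, Complex.mul_re]

lemma norm_graphState {n : ℕ} (A : Matrix (Fin n) (Fin n) ℝ) (x : Fin n → Fin 2) :
    ‖graphState A x‖ = (√2)⁻¹ ^ n := by
  simp [graphState, abs_of_nonneg (Real.sqrt_nonneg 2)]

lemma inn_tp_self_eq_one {n : ℕ} {w : Fin 2 → ℂ} {φ : (Fin n → Fin 2) → ℂ}
    (hw : ∀ b, ‖w b‖ = (√2)⁻¹) (hφ : ∀ x, ‖φ x‖ = (√2)⁻¹ ^ n) :
    inn (tp w φ) (tp w φ) = 1 := by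
  rw [inn_self_of_forall_norm_eq (r := (√2)⁻¹ ^ (n + 1)) fun p => by
    rw [tp, norm_mul, hw, hφ, pow_succ']]
  have hr : ((√2)⁻¹ ^ (n + 1)) ^ 2 = ((2 : ℝ) ^ (n + 1))⁻¹ := by
    rw [← pow_mul, mul_comm, pow_mul, inv_pow, Real.sq_sqrt zero_le_two, inv_pow]
  rw [← Complex.ofReal_pow, hr]
  simp only [Fintype.card_prod, Fintype.card_fun, Fintype.card_fin]
  push_cast
  field_simp
  ring

lemma two_mul_norm_half_sum_sub_le_norm (a b c d : ℂ) :
    2 * ‖(a + b + c + d) / 2‖ - ‖b‖ - ‖c‖ - ‖d‖ ≤ ‖a‖ := by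
  have := norm_add₄_le (a := a) (b := b) (c := c) (d := d)
  rw [norm_div, Complex.norm_two]
  linarith

theorem overlap_forces_Rn_stabilization_general
    {n : ℕ} (A₁ A₂ : Matrix (Fin n) (Fin n) ℝ)
    (C : Matrix (Fin 2 × (Fin n → Fin 2)) (Fin 2 × (Fin n → Fin 2)) ℂ)
    (hC : C ∈ Matrix.unitaryGroup (Fin 2 × (Fin n → Fin 2)) ℂ)
    (s : ℝ) (hs : s ≤ 1 / 100000)
    (hcross₁ : ‖inn (tp Rvec Rn) (C.mulVec (tp Rmvec (graphState A₂)))‖ ≤ s)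
    (hcross₂ : ‖inn (tp Rmvec (graphState A₁)) (C.mulVec (tp Rvec Rn))‖ ≤ s)
    (hmain : ‖inn
        (fun p => (Rvec p.1 * Rn p.2 + Rmvec p.1 * graphState A₁ p.2) / Real.sqrt 2)
        (C.mulVec
          (fun p => (Rvec p.1 * Rn p.2 + Rmvec p.1 * graphState A₂ p.2) / Real.sqrt 2))‖
      ≥ 0.99999) :
    ‖inn (tp Rvec Rn) (C.mulVec (tp Rvec Rn))‖ ^ 2 ≥ 0.9999 := by
  have hψ (A : Matrix (Fin n) (Fin n) ℝ) :
      (fun p : Fin 2 × (Fin n → Fin 2) =>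
        (Rvec p.1 * Rn p.2 + Rmvec p.1 * graphState A p.2) / (Real.sqrt 2 : ℂ)) =
      (((√2)⁻¹ : ℝ) : ℂ) • (tp Rvec Rn + tp Rmvec (graphState A)) := by
    funext p
    simp only [tp, Pi.smul_apply, Pi.add_apply, smul_eq_mul, Complex.ofReal_inv]
    ring
  have hhalf : (((√2)⁻¹ : ℝ) : ℂ) ^ 2 = 1 / 2 := by
    rw [← Complex.ofReal_pow, inv_pow, Real.sq_sqrt zero_le_two]
    norm_num
  rw [hψ, hψ, mulVec_smul, mulVec_add, inn_smul_smul_ofReal, inn_add_add,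
    hhalf, one_div, inv_mul_eq_div] at hmain
  set u := tp Rvec (Rn (n := n))
  set v₁ := tp Rmvec (graphState A₁)
  set v₂ := tp Rmvec (graphState A₂)
  have hdiag : ‖inn v₁ (C *ᵥ v₂)‖ ≤ 1 :=
    norm_inn_le_one (inn_tp_self_eq_one norm_Rmvec (norm_graphState A₁))
      (by rw [inn_mulVec_mulVec_of_mem_unitaryGroup hC,
        inn_tp_self_eq_one norm_Rmvec (norm_graphState A₂)])
  have hu : 0.99996 ≤ ‖inn u (C *ᵥ u)‖ := by
    linarith [two_mul_norm_half_sum_sub_le_norm (inn u (C *ᵥ u)) (inn u (C *ᵥ v₂))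
      (inn v₁ (C *ᵥ u)) (inn v₁ (C *ᵥ v₂))]
  nlinarith

/-- in the Graph Isomorphism reduction, if the cross terms are
negligible and the overlap of `ψ₁` with `C ψ₂` is at least `0.99999`, then `C`
approximately stabilizes `|R⟩ ⊗ |R^n⟩`. -/
theorem overlap_forces_Rn_stabilization
    {n : ℕ} (hn : 1 ≤ n) (A₁ A₂ : Matrix (Fin n) (Fin n) ℝ)
    (hA₁symm : A₁.IsSymm) (hA₂symm : A₂.IsSymm)
    (hA₁diag : ∀ i, A₁ i i = 0) (hA₂diag : ∀ i, A₂ i i = 0)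
    (hA₁01 : ∀ i j, A₁ i j = 0 ∨ A₁ i j = 1) (hA₂01 : ∀ i j, A₂ i j = 0 ∨ A₂ i j = 1)
    (C : Matrix (Fin 2 × (Fin n → Fin 2)) (Fin 2 × (Fin n → Fin 2)) ℂ)
    (hC : C ∈ Matrix.unitaryGroup (Fin 2 × (Fin n → Fin 2)) ℂ)
    (s : ℝ) (hs0 : 0 ≤ s) (hs : s ≤ 1 / 100000)
    (hcross₁ : ‖inn (tp Rvec Rn) (C.mulVec (tp Rmvec (graphState A₂)))‖ ≤ s)
    (hcross₂ : ‖inn (tp Rmvec (graphState A₁)) (C.mulVec (tp Rvec Rn))‖ ≤ s)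
    (hmain : ‖inn
        (fun p => (Rvec p.1 * Rn p.2 + Rmvec p.1 * graphState A₁ p.2) / Real.sqrt 2)
        (C.mulVec
          (fun p => (Rvec p.1 * Rn p.2 + Rmvec p.1 * graphState A₂ p.2) / Real.sqrt 2))‖
      ≥ 0.99999) :
    ‖inn (tp Rvec Rn) (C.mulVec (tp Rvec Rn))‖ ^ 2 ≥ 0.9999 :=
  overlap_forces_Rn_stabilization_general A₁ A₂ C hC s hs hcross₁ hcross₂ hmain
end
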